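/- Let n ≥ 2 and 2 ≤ k ≤ n be integers. Let f₁ be an admissible semitrough profile for (n,1) and let f_k be an admissible semitrough profile for (n,k). Then f₁(t) > f_k(t) for every t ∈ ℝ. -/

import Mathlib

/-!
If `f₁ ≤ f_k` somewhere, then `f₁ - f_k`, which tends to `l₁ - l_k > 0` at `-∞` and to `0` at
`+∞`, attains a non-positive minimum at some `w`. There the two profiles have the same slope and
`f₁'' ≥ f_k''`, and comparing the two profile equations at `w` (via AM-GM,
`k x ≤ x ^ k + k - 1` with equality only at `x = 1`, for `x = f_k √(1 - f_k'²)`) forces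
`x = 1`. So the profile `f_k` is tangent to a hyperbola at `w`. Along any solution the defect
`1 - f² (1 - f'²)` satisfies a linear first-order ODE, hence it vanishes identically once it
vanishes at one point; but it is positive wherever `f_k < 1`, e.g. near `-∞`.
-/

open Filter Real

/-- `lk n k = ((n-k)/n)^(1/k)`. -/
noncomputable def lk (n k : ℕ) : ℝ := (((n : ℝ) - k) / n) ^ ((1 : ℝ) / k)

/-- An admissible semitrough profile for `(n, k)`. -/
def IsAdmissibleProfile (n k : ℕ) (f : ℝ → ℝ) : Prop :=
  ContDiff ℝ 2 f ∧
  (∀ t : ℝ,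
      (k : ℝ) * deriv (deriv f) t /
          (f t ^ (k - 1) * (1 - deriv f t ^ 2) ^ ((k : ℝ) / 2 + 1)) +
        ((n : ℝ) - k) / (f t ^ k * (1 - deriv f t ^ 2) ^ ((k : ℝ) / 2)) = n) ∧
  (∀ t : ℝ, 0 < deriv f t ∧ deriv f t < 1 ∧ 0 < deriv (deriv f) t) ∧
  Tendsto f atBot (nhds (lk n k)) ∧
  (∀ t : ℝ, max (lk n k) t < f t ∧ f t < Real.sqrt (1 + t ^ 2)) ∧
  (∃ C > (0 : ℝ), ∃ T > (0 : ℝ), ∀ t > T,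
      |f t - Real.sqrt (1 + t ^ 2)| < C * t ^ (-(n : ℝ) - 1))

open Set Topology Finset

theorem one_add_mul_lt_pow {s : ℝ} (hs : -1 ≤ s) (hs0 : s ≠ 0) {k : ℕ} (hk : 2 ≤ k) :
    1 + k * s < (1 + s) ^ k := by
  simpa [Real.rpow_natCast] using
    one_add_mul_self_lt_rpow_one_add hs hs0 (p := k) (by exact_mod_cast hk)

theorem mul_lt_pow_add_sub_one {x : ℝ} (hx : 0 ≤ x) (hx1 : x ≠ 1) {k : ℕ} (hk : 2 ≤ k) :
    k * x < x ^ k + (k - 1) := by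
  have := one_add_mul_lt_pow (s := x - 1) (by linarith) (sub_ne_zero.mpr hx1) hk
  rw [add_sub_cancel] at this
  linarith

theorem lk_nonneg {n k : ℕ} (hkn : k ≤ n) : 0 ≤ lk n k :=
  rpow_nonneg (div_nonneg (sub_nonneg.mpr (by exact_mod_cast hkn)) n.cast_nonneg) _

theorem lk_pow {n k : ℕ} (hk : k ≠ 0) (hkn : k ≤ n) : lk n k ^ k = (n - k) / n := by
  rw [lk, one_div]
  exact rpow_inv_natCast_pow
    (div_nonneg (sub_nonneg.mpr (by exact_mod_cast hkn)) n.cast_nonneg) hk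

theorem lk_lt_one {n k : ℕ} (hk : k ≠ 0) (hkn : k ≤ n) : lk n k < 1 := by
  have hn : (0 : ℝ) < n := by exact_mod_cast (Nat.pos_of_ne_zero hk).trans_le hkn
  refine (pow_lt_one_iff_of_nonneg (lk_nonneg hkn) hk).mp ?_
  rw [lk_pow hk hkn, div_lt_one hn]
  have : (0 : ℝ) < k := by exact_mod_cast Nat.pos_of_ne_zero hk
  linarith

theorem lk_lt_lk_one {n k : ℕ} (hk : 2 ≤ k) (hkn : k ≤ n) : lk n k < lk n 1 := by
  have hn : (2 : ℝ) ≤ n := by exact_mod_cast hk.trans hkn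
  refine (pow_lt_pow_iff_left₀ (lk_nonneg hkn) (lk_nonneg (by omega)) (by omega : k ≠ 0)).mp ?_
  have hbern := one_add_mul_lt_pow (s := -1 / n)
    (by rw [neg_div, neg_le_neg_iff, div_le_one (by linarith)]; linarith)
    (div_ne_zero (by norm_num) (by positivity)) hk
  have hk' : (n - k : ℝ) / n = 1 + k * (-1 / n) := by field_simp; ring
  have h1 : (n - 1 : ℝ) / n = 1 + -1 / n := by field_simp; ring
  rwa [lk_pow (by omega) hkn, ← pow_one (lk n 1), lk_pow one_ne_zero (by omega), Nat.cast_one,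
    hk', h1]

theorem Continuous.exists_isLocalMin_nonpos {h : ℝ → ℝ} (hc : Continuous h) {L : ℝ} (hL : 0 < L)
    (hbot : Tendsto h atBot (𝓝 L)) (htop : Tendsto h atTop (𝓝 0)) {t₀ : ℝ} (ht₀ : h t₀ ≤ 0) :
    ∃ w, IsLocalMin h w ∧ h w ≤ 0 := by
  by_cases hneg : ∃ t₁, h t₁ < 0
  · obtain ⟨t₁, ht₁⟩ := hneg
    have hfar : ∀ᶠ t in cocompact ℝ, h t₁ ≤ h t := by
      rw [cocompact_eq_atBot_atTop, eventually_sup]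
      exact ⟨hbot.eventually (eventually_ge_nhds (by linarith)),
        htop.eventually (eventually_ge_nhds ht₁)⟩
    obtain ⟨w, hw⟩ := hc.exists_forall_le' t₁ hfar
    exact ⟨w, Eventually.of_forall hw, (hw t₁).trans ht₁.le⟩
  · push Not at hneg
    exact ⟨t₀, Eventually.of_forall fun t => ht₀.trans (hneg t), ht₀⟩

theorem IsLocalMin.deriv_deriv_nonneg {h : ℝ → ℝ} {w : ℝ} (hmin : IsLocalMin h w)
    (hd : Differentiable ℝ h) : 0 ≤ deriv (deriv h) w := by
  by_contra! hneg
  have hdecr : ∀ᶠ s in 𝓝[>] w, deriv h s < 0 :=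
    deriv_neg_right_of_sign_deriv <| nhdsWithin_le_nhds <|
      eventually_nhdsWithin_sign_eq_of_deriv_neg hneg hmin.deriv_eq_zero
  obtain ⟨u, hwu, hu⟩ :=
    mem_nhdsGT_iff_exists_Ioo_subset.mp (hdecr.and (nhdsWithin_le_nhds hmin))
  obtain ⟨s, hws, hsu⟩ := exists_between (mem_Ioi.mp hwu)
  obtain ⟨ξ, hξ, hslope⟩ := exists_deriv_eq_slope h hws hd.continuous.continuousOn
    hd.differentiableOn
  have hξneg := (hu ⟨hξ.1, hξ.2.trans hsu⟩).1
  have hs := (hu ⟨hws, hsu⟩).2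
  rw [hslope, div_neg_iff] at hξneg
  rcases hξneg with ⟨-, h'⟩ | ⟨h', -⟩ <;> linarith

theorem eq_zero_of_hasDerivAt_eq_mul {u c : ℝ → ℝ} (hc : Continuous c)
    (hu : ∀ t, HasDerivAt u (c t * u t) t) {w : ℝ} (hw : u w = 0) (t : ℝ) : u t = 0 := by
  set E : ℝ → ℝ := fun s => exp (-∫ r in w..s, c r)
  have hE : ∀ s, HasDerivAt E (-c s * E s) s := fun s => by
    simpa [E, mul_comm] using ((hc.integral_hasStrictDerivAt w s).hasDerivAt.neg).exp
  have huE : ∀ s, HasDerivAt (fun s => u s * E s) 0 s := fun s => by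
    have := (hu s).mul (hE s)
    rw [show c s * u s * E s + u s * (-c s * E s) = 0 by ring] at this
    exact this
  have hconst := is_const_of_deriv_eq_zero (fun s => (huE s).differentiableAt)
    (fun s => (huE s).deriv) t w
  simpa [hw, E, exp_ne_zero] using hconst

theorem profile_eq_clear_denoms {n k : ℕ} (hk : k ≠ 0) {f A q : ℝ} (hf : 0 < f) (hq : 0 < q)
    (heq : (k : ℝ) * A / (f ^ (k - 1) * (q ^ 2) ^ ((k : ℝ) / 2 + 1)) +
      ((n : ℝ) - k) / (f ^ k * (q ^ 2) ^ ((k : ℝ) / 2)) = n) :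
    k * A * f + (n - k) * q ^ 2 = n * (f * q) ^ k * q ^ 2 := by
  have hq2 : 0 < q ^ 2 := by positivity
  rw [rpow_add hq2, rpow_one, rpow_div_two_eq_sqrt _ hq2.le, sqrt_sq hq.le, rpow_natCast] at heq
  have hfk : f ^ k = f ^ (k - 1) * f := by rw [← pow_succ, Nat.sub_add_cancel (by omega)]
  rw [hfk] at heq
  field_simp at heq
  rw [mul_pow]
  linear_combination heq - (n * q ^ 2 * q ^ k) * hfk

theorem hyperbolicDefect_deriv_identity {n k : ℕ} (hk : k ≠ 0) {f p A q : ℝ} (hfq : 0 ≤ f * q)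
    (heq : k * A * f + (n - k) * q ^ 2 = n * (f * q) ^ k * q ^ 2) :
    -(2 * f * p * q ^ 2) + 2 * f ^ 2 * p * A =
      -(2 * n * f * p * q ^ 2 * ∑ i ∈ range k, (f * q) ^ i) / (k * (1 + f * q)) *
        (1 - (f * q) ^ 2) := by
  have hgeom := geom_sum_mul (f * q) k
  have : (k : ℝ) * (1 + f * q) ≠ 0 := by positivity
  rw [div_mul_eq_mul_div, eq_div_iff this]
  linear_combination (2 * f * p * (1 + f * q)) * heq
    - (2 * n * f * p * q ^ 2 * (1 + f * q)) * hgeom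

/-- At a point where a `1`-profile and a `k`-profile touch with common slope `p`: `a ≤ b` are
their values, `A ≥ B` their second derivatives and `q = √(1 - p²)`. -/
theorem mul_eq_one_of_touch {n k : ℕ} (hn : 1 ≤ n) (hk : 2 ≤ k) {a b A B q : ℝ}
    (ha : 0 < a) (hab : a ≤ b) (hBA : B ≤ A) (hq : 0 < q)
    (h₁ : A * a + (n - 1) * q ^ 2 = n * (a * q) * q ^ 2)
    (hₖ : k * B * b + (n - k) * q ^ 2 = n * (b * q) ^ k * q ^ 2) :
    b * q = 1 := by
  by_contra hx
  have hn : (1 : ℝ) ≤ n := by exact_mod_cast hn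
  have hb : 0 < b := ha.trans_le hab
  have hA : A * b ≤ n * q ^ 2 * (b * q) - (n - 1) * q ^ 2 := by
    have hmono : (n - 1) * q ^ 2 * a ≤ (n - 1) * q ^ 2 * b :=
      mul_le_mul_of_nonneg_left hab (mul_nonneg (by linarith) (sq_nonneg q))
    refine le_of_mul_le_mul_right ?_ ha
    linear_combination b * h₁ + hmono
  have hB : k * (n * q ^ 2 * (b * q) - (n - 1) * q ^ 2) < k * B * b := by
    have := mul_lt_mul_of_pos_left (mul_lt_pow_add_sub_one (by positivity) hx hk)
      (by positivity : (0 : ℝ) < n * q ^ 2)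
    linear_combination this - hₖ
  have hAB : k * B * b ≤ k * A * b := by gcongr
  have := mul_le_mul_of_nonneg_left hA (k.cast_nonneg : (0 : ℝ) ≤ k)
  linarith

/-- Vanishes identically along the hyperbolas `t ↦ √(1 + (t - c)²)`, which solve every profile
equation. -/
noncomputable def hyperbolicDefect (f : ℝ → ℝ) (t : ℝ) : ℝ := 1 - f t ^ 2 * (1 - deriv f t ^ 2)

namespace IsAdmissibleProfile

variable {n k : ℕ} {f : ℝ → ℝ}

theorem pos (hf : IsAdmissibleProfile n k f) (hkn : k ≤ n) (t : ℝ) : 0 < f t :=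
  (lk_nonneg hkn).trans_lt ((le_max_left _ _).trans_lt (hf.2.2.2.2.1 t).1)

theorem differentiable (hf : IsAdmissibleProfile n k f) : Differentiable ℝ f :=
  hf.1.differentiable (by norm_num)

theorem differentiable_deriv (hf : IsAdmissibleProfile n k f) : Differentiable ℝ (deriv f) :=
  (hf.1.deriv' (n := 1)).differentiable one_ne_zero

theorem tendsto_atBot (hf : IsAdmissibleProfile n k f) : Tendsto f atBot (𝓝 (lk n k)) :=
  hf.2.2.2.1

theorem one_sub_deriv_sq_pos (hf : IsAdmissibleProfile n k f) (t : ℝ) :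
    0 < 1 - deriv f t ^ 2 := by
  obtain ⟨h0, h1, -⟩ := hf.2.2.1 t
  nlinarith

theorem profile_eq (hf : IsAdmissibleProfile n k f) (hk : k ≠ 0) (hkn : k ≤ n) (t : ℝ) :
    k * deriv (deriv f) t * f t + (n - k) * √(1 - deriv f t ^ 2) ^ 2 =
      n * (f t * √(1 - deriv f t ^ 2)) ^ k * √(1 - deriv f t ^ 2) ^ 2 := by
  have heq := hf.2.1 t
  rw [← sq_sqrt (hf.one_sub_deriv_sq_pos t).le] at heq
  exact profile_eq_clear_denoms hk (hf.pos hkn t) (sqrt_pos.mpr (hf.one_sub_deriv_sq_pos t)) heq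

theorem tendsto_sub_sqrt_atTop (hf : IsAdmissibleProfile n k f) :
    Tendsto (fun t => f t - √(1 + t ^ 2)) atTop (𝓝 0) := by
  obtain ⟨C, -, T, -, hC⟩ := hf.2.2.2.2.2
  have hdecay : Tendsto (fun t : ℝ => C * t ^ (-(n : ℝ) - 1)) atTop (𝓝 0) := by
    have := (tendsto_rpow_neg_atTop (by positivity : (0 : ℝ) < n + 1)).const_mul C
    rw [mul_zero] at this
    exact this.congr fun t => by rw [neg_add']
  exact squeeze_zero_norm' ((eventually_gt_atTop T).mono fun t ht => (hC t ht).le) hdecay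

theorem exists_hyperbolicDefect_pos (hf : IsAdmissibleProfile n k f) (hk : k ≠ 0)
    (hkn : k ≤ n) : ∃ t, 0 < hyperbolicDefect f t := by
  obtain ⟨t, ht⟩ := (hf.tendsto_atBot.eventually (eventually_lt_nhds (lk_lt_one hk hkn))).exists
  have hpos := hf.pos hkn t
  have hW := hf.one_sub_deriv_sq_pos t
  refine ⟨t, ?_⟩
  rw [hyperbolicDefect]
  nlinarith [sq_nonneg (deriv f t), mul_pos hpos hpos]

theorem exists_hasDerivAt_hyperbolicDefect (hf : IsAdmissibleProfile n k f) (hk : k ≠ 0)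
    (hkn : k ≤ n) : ∃ c : ℝ → ℝ, Continuous c ∧
      ∀ t, HasDerivAt (hyperbolicDefect f) (c t * hyperbolicDefect f t) t := by
  set q : ℝ → ℝ := fun t => √(1 - deriv f t ^ 2)
  have hfc : Continuous f := hf.differentiable.continuous
  have hdc : Continuous (deriv f) := hf.differentiable_deriv.continuous
  refine ⟨fun t => -(2 * n * f t * deriv f t * (1 - deriv f t ^ 2) *
    ∑ i ∈ range k, (f t * q t) ^ i) / (k * (1 + f t * q t)), ?_, fun t => ?_⟩
  · refine Continuous.div (by fun_prop) (by fun_prop) fun t => ?_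
    have : 0 ≤ f t * q t := mul_nonneg (hf.pos hkn t).le (sqrt_nonneg _)
    positivity
  · have hderiv := (((hf.differentiable t).hasDerivAt.fun_pow 2).fun_mul
      (((hf.differentiable_deriv t).hasDerivAt.fun_pow 2).const_sub 1)).const_sub 1
    have key := hyperbolicDefect_deriv_identity hk (p := deriv f t)
      (mul_nonneg (hf.pos hkn t).le (sqrt_nonneg _)) (hf.profile_eq hk hkn t)
    rw [mul_pow, sq_sqrt (hf.one_sub_deriv_sq_pos t).le] at key
    refine hderiv.congr_deriv ?_
    simp only [hyperbolicDefect, q]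
    linear_combination key

theorem hyperbolicDefect_eq_zero_of_touch {g : ℝ → ℝ} (hf : IsAdmissibleProfile n k f)
    (hg : IsAdmissibleProfile n 1 g) (hk : 2 ≤ k) (hkn : k ≤ n) {w : ℝ} (hle : g w ≤ f w)
    (hd : deriv g w = deriv f w) (hdd : deriv (deriv f) w ≤ deriv (deriv g) w) :
    hyperbolicDefect f w = 0 := by
  have h₁ := hg.profile_eq one_ne_zero (by omega) w
  rw [hd] at h₁
  simp only [Nat.cast_one, one_mul, pow_one] at h₁
  have hx := mul_eq_one_of_touch (by omega) hk (hg.pos (by omega) w) hle hdd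
    (sqrt_pos.mpr (hf.one_sub_deriv_sq_pos w)) h₁ (hf.profile_eq (by omega) hkn w)
  rw [hyperbolicDefect, ← sq_sqrt (hf.one_sub_deriv_sq_pos w).le, ← mul_pow, hx]
  norm_num

end IsAdmissibleProfile

theorem semitrough_profile_comparison_general (n k : ℕ) (hk2 : 2 ≤ k) (hkn : k ≤ n)
    (f₁ fk : ℝ → ℝ)
    (h₁ : IsAdmissibleProfile n 1 f₁) (hk : IsAdmissibleProfile n k fk) :
    ∀ t : ℝ, f₁ t > fk t := by
  intro t₀
  by_contra! h₀
  have hgap : Tendsto (fun t => f₁ t - fk t) atBot (𝓝 (lk n 1 - lk n k)) :=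
    h₁.tendsto_atBot.sub hk.tendsto_atBot
  have hdecay : Tendsto (fun t => f₁ t - fk t) atTop (𝓝 0) := by
    simpa using h₁.tendsto_sub_sqrt_atTop.sub hk.tendsto_sub_sqrt_atTop
  obtain ⟨w, hmin, hw⟩ := (h₁.differentiable.continuous.sub hk.differentiable.continuous
    ).exists_isLocalMin_nonpos (h := fun t => f₁ t - fk t) (sub_pos.mpr (lk_lt_lk_one hk2 hkn))
    hgap hdecay (sub_nonpos.mpr h₀)
  have hderiv_sub : deriv (fun t => f₁ t - fk t) = fun t => deriv f₁ t - deriv fk t :=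
    funext fun t => deriv_sub (h₁.differentiable t) (hk.differentiable t)
  have hd : deriv f₁ w = deriv fk w := by
    simpa [hderiv_sub, sub_eq_zero] using hmin.deriv_eq_zero
  have hdd : deriv (deriv fk) w ≤ deriv (deriv f₁) w := by
    have := hmin.deriv_deriv_nonneg (h₁.differentiable.sub hk.differentiable)
    rwa [hderiv_sub, deriv_fun_sub (h₁.differentiable_deriv w) (hk.differentiable_deriv w),
      sub_nonneg] at this
  obtain ⟨c, hc, hc_deriv⟩ := hk.exists_hasDerivAt_hyperbolicDefect (by omega) hkn
  obtain ⟨t, ht⟩ := hk.exists_hyperbolicDefect_pos (by omega) hkn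
  exact ht.ne' (eq_zero_of_hasDerivAt_eq_mul hc hc_deriv
    (hk.hyperbolicDefect_eq_zero_of_touch h₁ hk2 hkn (sub_nonpos.mp hw) hd hdd) t)

/-- Comparison of semitrough profiles: the mean curvature (`k = 1`) profile dominates
the `σ_k` profile for every `2 ≤ k ≤ n`. -/
theorem semitrough_profile_comparison (n k : ℕ) (hn : 2 ≤ n) (hk2 : 2 ≤ k) (hkn : k ≤ n)
    (f₁ fk : ℝ → ℝ)
    (h₁ : IsAdmissibleProfile n 1 f₁) (hk : IsAdmissibleProfile n k fk) :
    ∀ t : ℝ, f₁ t > fk t :=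
  semitrough_profile_comparison_general n k hk2 hkn f₁ fk h₁ hk
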